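/- Let h : [0,1] → [0,∞) be a C² function with h(0) = h(1) = 0, and let a > c ≥ 0. If h''(t) ≥ -|h'(t)| - c for all t ∈ [0,1], then the function f(t) = h(t) - a·t·(1-t) attains its maximum on [0,1] only at the endpoints, i.e. max_{[0,1]} f = 0. -/

import Mathlib

/-!
Let `F t = h t - a t (1 - t)`; it vanishes at both endpoints, so it suffices to rule out a
positive interior maximum `t₀`. There `F' t₀ = 0` gives `h' t₀ = a (1 - 2 t₀)`, hence
`|h' t₀| ≤ a`, and then `F'' t₀ = h'' t₀ + 2a ≥ a - c > 0`, which is impossible at a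
local maximum.
-/

open Set Filter Topology

theorem IsLocalMax.nonpos_of_hasDerivAt_hasDerivAt {f f' : ℝ → ℝ} {x₀ f'' : ℝ}
    (hmax : IsLocalMax f x₀) (hf : ∀ᶠ x in 𝓝 x₀, HasDerivAt f (f' x) x)
    (hf' : HasDerivAt f' f'' x₀) : f'' ≤ 0 := by
  by_contra! hpos
  have hderiv : deriv f =ᶠ[𝓝 x₀] f' := hf.mono fun x hx => hx.deriv
  have hcrit : deriv f x₀ = 0 := hderiv.eq_of_nhds ▸ hmax.hasDerivAt_eq_zero hf.self_of_nhds
  have hmin : IsLocalMin f x₀ :=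
    isLocalMin_of_deriv_deriv_pos ((hf'.congr_of_eventuallyEq hderiv).deriv ▸ hpos) hcrit
      hf.self_of_nhds.continuousAt
  -- Being both a local maximum and a local minimum, `f` is locally constant, so `f'' = 0`.
  have hconst : f =ᶠ[𝓝 x₀] fun _ => f x₀ :=
    (hmax.and hmin).mono fun x hx => le_antisymm hx.1 hx.2
  have hzero : f' =ᶠ[𝓝 x₀] fun _ => 0 := by
    filter_upwards [hf, hconst.eventuallyEq_nhds] with x hx hxconst
    exact hx.unique ((hasDerivAt_const x (f x₀)).congr_of_eventuallyEq hxconst)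
  exact hpos.ne' (hf'.unique ((hasDerivAt_const x₀ (0 : ℝ)).congr_of_eventuallyEq hzero))

theorem hasDerivAt_mul_mul_one_sub (a t : ℝ) :
    HasDerivAt (fun s => a * s * (1 - s)) (a * (1 - 2 * t)) t :=
  (((hasDerivAt_id' t).const_mul a).mul ((hasDerivAt_id' t).const_sub 1)).congr_deriv
    (by ring)

theorem not_isLocalMax_sub_mul_mul_one_sub {h h' : ℝ → ℝ} {a c t₀ h'' : ℝ}
    (ha : 0 ≤ a) (hca : c < a) (ht₀ : t₀ ∈ Icc (0 : ℝ) 1)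
    (hd1 : ∀ᶠ t in 𝓝 t₀, HasDerivAt h (h' t) t) (hd2 : HasDerivAt h' h'' t₀)
    (hineq : -|h' t₀| - c ≤ h'') :
    ¬ IsLocalMax (fun t => h t - a * t * (1 - t)) t₀ := by
  intro hmax
  have hF' : ∀ᶠ t in 𝓝 t₀, HasDerivAt (fun t => h t - a * t * (1 - t))
      (h' t - a * (1 - 2 * t)) t :=
    hd1.mono fun t ht => ht.sub (hasDerivAt_mul_mul_one_sub a t)
  have hF'' : HasDerivAt (fun t => h' t - a * (1 - 2 * t)) (h'' + 2 * a) t₀ :=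
    (hd2.sub ((((hasDerivAt_id' t₀).const_mul 2).const_sub 1).const_mul a)).congr_deriv (by ring)
  have hcrit : h' t₀ = a * (1 - 2 * t₀) :=
    sub_eq_zero.1 (hmax.hasDerivAt_eq_zero hF'.self_of_nhds)
  have hslope : |h' t₀| ≤ a := by
    rw [hcrit, abs_le]
    constructor <;> nlinarith [ht₀.1, ht₀.2]
  have := hmax.nonpos_of_hasDerivAt_hasDerivAt hF' hF''
  linarith

theorem stmt_4_general (h h' h'' : ℝ → ℝ) (a c : ℝ)
    (hc : 0 ≤ c) (hac : c < a)
    (h0 : h 0 = 0) (h1 : h 1 = 0)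
    (hd1 : ∀ t ∈ Set.Icc (0:ℝ) 1, HasDerivAt h (h' t) t)
    (hd2 : ∀ t ∈ Set.Icc (0:ℝ) 1, HasDerivAt h' (h'' t) t)
    (hineq : ∀ t ∈ Set.Icc (0:ℝ) 1, -|h' t| - c ≤ h'' t) :
    sSup ((fun t => h t - a * t * (1 - t)) '' Set.Icc (0:ℝ) 1) = 0 ∧
      ∀ t ∈ Set.Icc (0:ℝ) 1, h t - a * t * (1 - t) ≤ 0 := by
  set F : ℝ → ℝ := fun t => h t - a * t * (1 - t)
  have hFcont : ContinuousOn F (Icc 0 1) := fun t ht =>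
    ((hd1 t ht).continuousAt.sub (hasDerivAt_mul_mul_one_sub a t).continuousAt).continuousWithinAt
  obtain ⟨t₀, ht₀, hmax⟩ := isCompact_Icc.exists_isMaxOn (nonempty_Icc.2 zero_le_one) hFcont
  have hmax_nonpos : F t₀ ≤ 0 := by
    by_contra! hFpos
    have ht₀' : t₀ ∈ Ioo 0 1 := by
      refine ⟨lt_of_le_of_ne ht₀.1 ?_, lt_of_le_of_ne ht₀.2 ?_⟩ <;>
        rintro rfl <;> simp_all [F]
    have hIcc : Icc (0 : ℝ) 1 ∈ 𝓝 t₀ := Icc_mem_nhds ht₀'.1 ht₀'.2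
    exact not_isLocalMax_sub_mul_mul_one_sub (hc.trans hac.le) hac ht₀
      (eventually_of_mem hIcc hd1) (hd2 t₀ ht₀) (hineq t₀ ht₀) (hmax.isLocalMax hIcc)
  have hle : ∀ t ∈ Icc (0 : ℝ) 1, F t ≤ 0 := fun t ht => (hmax ht).trans hmax_nonpos
  have hgreatest : IsGreatest (F '' Icc 0 1) 0 :=
    ⟨⟨0, left_mem_Icc.2 zero_le_one, by simp [F, h0]⟩,
      by rintro _ ⟨t, ht, rfl⟩; exact hle t ht⟩
  exact ⟨hgreatest.csSup_eq, hle⟩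

/-- With `a > c ≥ 0` and `h'' ≥ -|h'| - c` on `[0,1]`, the function
`f t = h t - a*t*(1-t)` attains its maximum on `[0,1]` only at the endpoints,
i.e. `max_{[0,1]} f = 0`. -/
theorem stmt_4 (h h' h'' : ℝ → ℝ) (a c : ℝ)
    (hc : 0 ≤ c) (hac : c < a)
    (hpos : ∀ t ∈ Set.Icc (0:ℝ) 1, 0 ≤ h t)
    (h0 : h 0 = 0) (h1 : h 1 = 0)
    (hd1 : ∀ t ∈ Set.Icc (0:ℝ) 1, HasDerivAt h (h' t) t)
    (hd2 : ∀ t ∈ Set.Icc (0:ℝ) 1, HasDerivAt h' (h'' t) t)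
    (hcont : ContinuousOn h'' (Set.Icc (0:ℝ) 1))
    (hineq : ∀ t ∈ Set.Icc (0:ℝ) 1, -|h' t| - c ≤ h'' t) :
    sSup ((fun t => h t - a * t * (1 - t)) '' Set.Icc (0:ℝ) 1) = 0 ∧
      ∀ t ∈ Set.Icc (0:ℝ) 1, h t - a * t * (1 - t) ≤ 0 :=
  stmt_4_general h h' h'' a c hc hac h0 h1 hd1 hd2 hineq
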